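/- arXiv:1203.4027 — 2 statements merged into one kernel-verified Lean document; each statement's English description precedes it below -/
import Mathlib

section
/- Let α ≥ 0, β ≥ 0 and C > 0, and let (c_j)_{j≥0} be a sequence of real numbers such that c_j/(C j^α) → 1 as j → ∞. Then lim_{k→∞} (Σ_{j=0}^{k−1} c_j (k−j)^β) / k^{α+β+1} = C ∫₀¹ x^α (1−x)^β dx. -/
open Filter Topology Asymptotics Finset MeasureTheory

/-!
Write `c_j = C j^α + u_j` with `u_j = o(j^α)`. The main part, divided by `k^(α+β+1)`, is
`C` times the left Riemann sum of `x^α (1-x)^β` at the nodes `j/k`, which converges to the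
integral because the integrand is uniformly continuous on `[0,1]`. In the error sum, the
finitely many `j < N` before `|u_j| ≤ ε j^α` holds contribute `O(k^β) = o(k^(α+β+1))`, and
the remaining terms are at most `ε` times the main sum, which is `O(k^(α+β+1))`.
-/

theorem isLittleO_rpow_rpow_atTop {a b : ℝ} (hab : a < b) :
    (fun x : ℝ => x ^ a) =o[atTop] fun x => x ^ b := by
  have hsmall : (fun x : ℝ => x ^ (a - b)) =o[atTop] fun _ => (1 : ℝ) :=
    (isLittleO_one_iff ℝ).2 (by simpa using tendsto_rpow_neg_atTop (sub_pos.2 hab))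
  refine (hsmall.mul_isBigO (isBigO_refl (fun x : ℝ => x ^ b) atTop)).congr' ?_ (by simp)
  filter_upwards [eventually_gt_atTop 0] with x hx
  rw [← Real.rpow_add hx, sub_add_cancel]

section RiemannSum

variable {f : ℝ → ℝ} {a b ε : ℝ}

theorem abs_integral_sub_mul_le (hab : a ≤ b) (hf : IntervalIntegrable f volume a b)
    (hε : ∀ x ∈ Set.Icc a b, |f x - f a| ≤ ε) :
    |(∫ x in a..b, f x) - (b - a) * f a| ≤ ε * (b - a) := by
  have hsub : (∫ x in a..b, f x) - (b - a) * f a = ∫ x in a..b, (f x - f a) := by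
    rw [intervalIntegral.integral_sub hf intervalIntegrable_const,
      intervalIntegral.integral_const, smul_eq_mul]
  calc |(∫ x in a..b, f x) - (b - a) * f a| ≤ ε * |b - a| := by
        rw [hsub]
        refine intervalIntegral.norm_integral_le_of_norm_le_const (f := fun x => f x - f a)
          fun x hx => (Real.norm_eq_abs _).trans_le (hε x ?_)
        rw [Set.uIoc_of_le hab] at hx
        exact Set.Ioc_subset_Icc_self hx
    _ = ε * (b - a) := by rw [abs_of_nonneg (sub_nonneg.2 hab)]

theorem abs_sum_div_sub_integral_le {n : ℕ} (hn : 0 < n)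
    (hf : IntervalIntegrable f volume 0 1)
    (hε : ∀ x ∈ Set.Icc (0 : ℝ) 1, ∀ y ∈ Set.Icc (0 : ℝ) 1, |x - y| ≤ 1 / n → |f x - f y| ≤ ε) :
    |(∑ j ∈ range n, f (j / n)) / n - ∫ x in (0 : ℝ)..1, f x| ≤ ε := by
  have hn' : (0 : ℝ) < n := Nat.cast_pos.2 hn
  have hsub : ∀ j ≤ n, (j : ℝ) / n ∈ Set.Icc (0 : ℝ) 1 := fun j hj =>
    ⟨by positivity, (div_le_one hn').2 (Nat.cast_le.2 hj)⟩
  have hmono : ∀ j < n, (j : ℝ) / n ≤ (j + 1 : ℕ) / n := fun j _ => by gcongr; simp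
  have hint : ∀ j < n, IntervalIntegrable f volume (j / n) ((j + 1 : ℕ) / n) := by
    intro j hj
    refine hf.mono_set ?_
    rw [Set.uIcc_of_le (hmono j hj), Set.uIcc_of_le zero_le_one]
    exact Set.Icc_subset_Icc (hsub j hj.le).1 (hsub (j + 1) hj).2
  have hsplit : ∑ j ∈ range n, ∫ x in (j / n : ℝ)..((j + 1 : ℕ) / n), f x =
      ∫ x in (0 : ℝ)..1, f x := by
    rw [intervalIntegral.sum_integral_adjacent_intervals hint]
    simp [hn'.ne']
  have hpiece : ∀ j ∈ range n,
      |(∫ x in (j / n : ℝ)..((j + 1 : ℕ) / n), f x) - f (j / n) / n| ≤ ε / n := by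
    intro j hj
    have hj := mem_range.1 hj
    have hlen : ((j + 1 : ℕ) : ℝ) / n - j / n = 1 / n := by push_cast; ring
    have hosc : ∀ x ∈ Set.Icc ((j : ℝ) / n) ((j + 1 : ℕ) / n), |f x - f (j / n)| ≤ ε := by
      intro x hx
      refine hε x ⟨(hsub j hj.le).1.trans hx.1, hx.2.trans (hsub (j + 1) hj).2⟩ _ (hsub j hj.le) ?_
      rw [abs_of_nonneg (sub_nonneg.2 hx.1)]
      linarith [hx.2]
    have := abs_integral_sub_mul_le (hmono j hj) (hint j hj) hosc
    rwa [hlen, one_div_mul_eq_div, mul_one_div] at this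
  rw [← hsplit, sum_div, abs_sub_comm, ← sum_sub_distrib]
  calc |∑ j ∈ range n, ((∫ x in (j / n : ℝ)..((j + 1 : ℕ) / n), f x) - f (j / n) / n)|
      ≤ ∑ j ∈ range n, ε / n := (abs_sum_le_sum_abs _ _).trans (sum_le_sum hpiece)
    _ = ε := by rw [sum_const, card_range, nsmul_eq_mul]; field_simp

theorem tendsto_sum_div_integral (hf : ContinuousOn f (Set.Icc 0 1)) :
    Tendsto (fun n : ℕ => (∑ j ∈ range n, f (j / n)) / n) atTop (𝓝 (∫ x in (0 : ℝ)..1, f x)) := by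
  rw [Metric.tendsto_nhds]
  intro ε hε
  obtain ⟨δ, hδ, hfδ⟩ := Metric.uniformContinuousOn_iff_le.1
    (isCompact_Icc.uniformContinuousOn_of_continuous hf) (ε / 2) (half_pos hε)
  filter_upwards [eventually_gt_atTop 0,
    tendsto_one_div_atTop_nhds_zero_nat.eventually (ge_mem_nhds hδ)] with n hn hnδ
  refine (abs_sum_div_sub_integral_le hn (hf.intervalIntegrable_of_Icc zero_le_one)
    fun x hx y hy hxy => ?_).trans_lt (half_lt_self hε)
  simpa only [Real.dist_eq] using hfδ x hx y hy (by rw [Real.dist_eq]; exact hxy.trans hnδ)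

end RiemannSum

section WeightedSum

variable {α β : ℝ}

theorem tendsto_sum_rpow_mul_rpow_div (hα : 0 ≤ α) (hβ : 0 ≤ β) :
    Tendsto
      (fun k : ℕ => (∑ j ∈ range k, (j : ℝ) ^ α * ((k - j : ℕ) : ℝ) ^ β) / (k : ℝ) ^ (α + β + 1))
      atTop (𝓝 (∫ x in (0 : ℝ)..1, x ^ α * (1 - x) ^ β)) := by
  have hcont : ContinuousOn (fun x : ℝ => x ^ α * (1 - x) ^ β) (Set.Icc 0 1) :=
    ((Real.continuous_rpow_const hα).mul
      ((continuous_const.sub continuous_id).rpow_const fun _ => Or.inr hβ)).continuousOn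
  refine (tendsto_sum_div_integral hcont).congr' ?_
  filter_upwards [eventually_gt_atTop 0] with k hk
  have hk' : (0 : ℝ) < k := Nat.cast_pos.2 hk
  rw [Real.rpow_add_one hk'.ne', Real.rpow_add hk', sum_div, sum_div]
  refine sum_congr rfl fun j hj => ?_
  have hjk : j ≤ k := (mem_range.1 hj).le
  rw [Nat.cast_sub hjk, one_sub_div hk'.ne', Real.div_rpow (Nat.cast_nonneg j) hk'.le,
    Real.div_rpow (sub_nonneg.2 (Nat.cast_le.2 hjk)) hk'.le]
  field_simp

theorem abs_sum_mul_rpow_le {u : ℕ → ℝ} {N k : ℕ} {ε : ℝ} (hβ : 0 ≤ β) (hε : 0 ≤ ε)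
    (hNk : N ≤ k) (hu : ∀ j ≥ N, |u j| ≤ ε * (j : ℝ) ^ α) :
    |∑ j ∈ range k, u j * ((k - j : ℕ) : ℝ) ^ β| ≤
      (∑ j ∈ range N, |u j|) * (k : ℝ) ^ β +
        ε * ∑ j ∈ range k, (j : ℝ) ^ α * ((k - j : ℕ) : ℝ) ^ β := by
  have habs : ∀ j, |u j * ((k - j : ℕ) : ℝ) ^ β| = |u j| * ((k - j : ℕ) : ℝ) ^ β := fun j => by
    rw [abs_mul, abs_of_nonneg (Real.rpow_nonneg (Nat.cast_nonneg _) β)]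
  have hhead : |∑ j ∈ range N, u j * ((k - j : ℕ) : ℝ) ^ β| ≤
      (∑ j ∈ range N, |u j|) * (k : ℝ) ^ β := by
    rw [sum_mul]
    refine (abs_sum_le_sum_abs _ _).trans (sum_le_sum fun j _ => ?_)
    rw [habs]
    gcongr
    exact Nat.sub_le k j
  have htail : |∑ j ∈ Ico N k, u j * ((k - j : ℕ) : ℝ) ^ β| ≤
      ε * ∑ j ∈ range k, (j : ℝ) ^ α * ((k - j : ℕ) : ℝ) ^ β := by
    calc |∑ j ∈ Ico N k, u j * ((k - j : ℕ) : ℝ) ^ β|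
        ≤ ∑ j ∈ Ico N k, |u j| * ((k - j : ℕ) : ℝ) ^ β :=
          (abs_sum_le_sum_abs _ _).trans_eq (sum_congr rfl fun j _ => habs j)
      _ ≤ ∑ j ∈ Ico N k, ε * ((j : ℝ) ^ α * ((k - j : ℕ) : ℝ) ^ β) :=
          sum_le_sum fun j hj => by rw [← mul_assoc]; gcongr; exact hu j (mem_Ico.1 hj).1
      _ ≤ ε * ∑ j ∈ range k, (j : ℝ) ^ α * ((k - j : ℕ) : ℝ) ^ β := by
          rw [← mul_sum]
          gcongr
          exact fun j hj => mem_range.2 (mem_Ico.1 hj).2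
  rw [← sum_range_add_sum_Ico _ hNk]
  exact (abs_add_le _ _).trans (add_le_add hhead htail)

theorem isLittleO_sum_mul_rpow {u : ℕ → ℝ} (hα : 0 ≤ α) (hβ : 0 ≤ β)
    (hu : u =o[atTop] fun j : ℕ => (j : ℝ) ^ α) :
    (fun k : ℕ => ∑ j ∈ range k, u j * ((k - j : ℕ) : ℝ) ^ β) =o[atTop]
      fun k : ℕ => (k : ℝ) ^ (α + β + 1) := by
  obtain ⟨B, hB, hR⟩ := (isBigO_atTop_natCast_rpow_of_tendsto_div_rpow
    (tendsto_sum_rpow_mul_rpow_div hα hβ)).exists_pos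
  have hpow : (fun k : ℕ => (k : ℝ) ^ β) =o[atTop] fun k : ℕ => (k : ℝ) ^ (α + β + 1) :=
    (isLittleO_rpow_rpow_atTop (by linarith)).comp_tendsto tendsto_natCast_atTop_atTop
  refine IsLittleO.of_bound fun ε hε => ?_
  obtain ⟨N, hN⟩ := eventually_atTop.1 (hu.bound (div_pos hε (mul_pos two_pos hB)))
  filter_upwards [(hpow.const_mul_left (∑ j ∈ range N, |u j|)).bound (half_pos hε), hR.bound,
    eventually_ge_atTop N] with k hhead hbulk hNk
  have hbound := abs_sum_mul_rpow_le (ε := ε / (2 * B)) hβ (by positivity) hNk fun j hj => by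
    simpa [abs_of_nonneg (by positivity : 0 ≤ (j : ℝ) ^ α)] using hN j hj
  rw [Real.norm_eq_abs]
  calc _ ≤ _ := hbound
    _ ≤ ε / 2 * ‖(k : ℝ) ^ (α + β + 1)‖ + ε / (2 * B) * (B * ‖(k : ℝ) ^ (α + β + 1)‖) := by
        refine add_le_add ((Real.le_norm_self _).trans hhead) ?_
        gcongr
        exact (Real.le_norm_self _).trans hbulk
    _ = ε * ‖(k : ℝ) ^ (α + β + 1)‖ := by field_simp; ring

end WeightedSum

theorem riemann_sum_asymptotics_general (α β C : ℝ) (hα : 0 ≤ α) (hβ : 0 ≤ β)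
    (c : ℕ → ℝ) (hc : Tendsto (fun j : ℕ => c j / (C * (j : ℝ) ^ α)) atTop (𝓝 1)) :
    Tendsto
      (fun k : ℕ =>
        (∑ j ∈ Finset.range k, c j * ((k - j : ℕ) : ℝ) ^ β) / (k : ℝ) ^ (α + β + 1))
      atTop (𝓝 (C * ∫ x in (0:ℝ)..1, x ^ α * (1 - x) ^ β)) := by
  have herr : (fun j : ℕ => c j - C * (j : ℝ) ^ α) =o[atTop] fun j : ℕ => (j : ℝ) ^ α :=
    (isEquivalent_of_tendsto_one hc).isLittleO.trans_isBigO (isBigO_const_mul_self C _ _)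
  have hmain := (tendsto_sum_rpow_mul_rpow_div hα hβ).const_mul C
  have hrest := (isLittleO_sum_mul_rpow hα hβ herr).tendsto_div_nhds_zero
  rw [← add_zero (C * _)]
  refine (hmain.add hrest).congr fun k => ?_
  rw [mul_div_assoc', ← add_div, mul_sum, ← sum_add_distrib]
  congr 1
  exact sum_congr rfl fun j _ => by ring

/-- If `c_j ∼ C j^α` as `j → ∞` (i.e. `c_j/(C j^α) → 1`), then
`∑_{j=0}^{k−1} c_j (k−j)^β ∼ C k^{α+β+1} ∫₀¹ x^α (1−x)^β dx` as `k → ∞`. -/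
theorem riemann_sum_asymptotics (α β C : ℝ) (hα : 0 ≤ α) (hβ : 0 ≤ β) (hC : 0 < C)
    (c : ℕ → ℝ) (hc : Tendsto (fun j : ℕ => c j / (C * (j : ℝ) ^ α)) atTop (𝓝 1)) :
    Tendsto
      (fun k : ℕ =>
        (∑ j ∈ Finset.range k, c j * ((k - j : ℕ) : ℝ) ^ β) / (k : ℝ) ^ (α + β + 1))
      atTop (𝓝 (C * ∫ x in (0:ℝ)..1, x ^ α * (1 - x) ^ β)) :=
  riemann_sum_asymptotics_general α β C hα hβ c hc
end

section
/- Let d ≥ 1 and 1 < p < 1 + 4/d. Then for every m > 0 and every A > 0, sup_{0 < h ≤ A} E_min(m,h) < 0; that is, there exists c > 0 such that E_min(m,h) ≤ −c for every h ∈ (0, A]. -/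
open MeasureTheory Filter Topology
open scoped ENNReal

noncomputable section

/-- The lattice `ℤ^d`. -/
abbrev ZLat (d : ℕ) := Fin d → ℤ

/-- Mass of `v : ℤ^d → ℂ` at grid size `h`:  `M_h(v) = h^d ∑_x |v x|²`. -/
def massZ (d : ℕ) (h : ℝ) (v : ZLat d → ℂ) : ℝ :=
  h ^ d * ∑' x : ZLat d, ‖v x‖ ^ 2

/-- Gradient term `G_h(v) = (h^{d-2}/2) ∑_{x∼y} |v x - v y|²`, the sum being over
ordered pairs of neighbours, grouped here by `x` and the `2d` neighbours `x ± eᵢ`. -/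
def gradZ (d : ℕ) (h : ℝ) (v : ZLat d → ℂ) : ℝ :=
  h ^ d / h ^ 2 / 2 *
    ∑' x : ZLat d, ∑ i : Fin d,
      (‖v (x + Pi.single i 1) - v x‖ ^ 2 + ‖v (x - Pi.single i 1) - v x‖ ^ 2)

/-- Nonlinear term `N_h(v) = (h^d/(p+1)) ∑_x |v x|^{p+1}`. -/
def nonlinZ (d : ℕ) (p h : ℝ) (v : ZLat d → ℂ) : ℝ :=
  h ^ d / (p + 1) * ∑' x : ZLat d, ‖v x‖ ^ (p + 1)

/-- Energy `H_h(v) = G_h(v) - N_h(v)`. -/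
def energyZ (d : ℕ) (p h : ℝ) (v : ZLat d → ℂ) : ℝ :=
  gradZ d h v - nonlinZ d p h v

/-- `ℓ²(ℤ^d)`. -/
def ell2 (d : ℕ) : Set (ZLat d → ℂ) := {v | Summable fun x => ‖v x‖ ^ 2}

/-- `E_min(m,h) = inf {H_h(v) : v ∈ ℓ²(ℤ^d), M_h(v) = m}`. -/
def Emin (d : ℕ) (p h m : ℝ) : ℝ :=
  sInf (energyZ d p h '' {v ∈ ell2 d | massZ d h v = m})

/-! Test the energy with the tensor power `x ↦ ∏ᵢ tent N (xᵢ)` of a discrete tent of width `N`,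
rescaled to mass `m`. In terms of the physical length `ℓ = h N`, its gradient term is
`O(m / ℓ²)` while its nonlinear term is at least a constant times `m^((p+1)/2) ℓ^(-d(p-1)/2)`,
uniformly in `h`. Since `d(p-1)/2 < 2`, the second term wins on a window `ℓ ∈ [L, 2L]` with `L`
large, and every `h ≤ A ≤ L` admits an integer `N` with `h N ∈ [L, L + h] ⊆ [L, 2L]`. -/

open Finset Function

lemma hasSum_prod_apply {ι κ R : Type*} [Fintype ι] [DecidableEq ι] [CommSemiring R]
    [TopologicalSpace R] (s : Finset κ) (F : ι → κ → R)
    (hF : ∀ i, ∀ k ∉ s, F i k = 0) :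
    HasSum (fun x : ι → κ => ∏ i, F i (x i)) (∏ i, ∑ k ∈ s, F i k) := by
  rw [prod_univ_sum]
  refine hasSum_sum_of_ne_finset_zero fun x hx => ?_
  obtain ⟨i, hi⟩ := not_forall.mp (Fintype.mem_piFinset.not.mp hx)
  exact prod_eq_zero (mem_univ i) (hF i _ hi)

lemma prod_apply_update {ι κ M : Type*} [Fintype ι] [DecidableEq ι] [CommMonoid M]
    (f : κ → M) (x : ι → κ) (i : ι) (y : κ) :
    ∏ j, f (update x i y j) = f y * ∏ j ∈ univ \ {i}, f (x j) := by
  simp_rw [apply_update (fun _ => f)]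
  exact prod_update_of_mem (mem_univ i) _ _

lemma add_single_eq_update {ι M : Type*} [DecidableEq ι] [AddZeroClass M] (x : ι → M) (i : ι)
    (a : M) :
    x + Pi.single i a = update x i (x i + a) := by
  ext j
  rcases eq_or_ne j i with rfl | hj <;> simp [*]

lemma sub_single_eq_update {ι G : Type*} [DecidableEq ι] [AddGroup G] (x : ι → G) (i : ι)
    (a : G) :
    x - Pi.single i a = update x i (x i - a) := by
  ext j
  rcases eq_or_ne j i with rfl | hj <;> simp [*]

lemma tsum_norm_rpow_le {ι E : Type*} [SeminormedAddCommGroup E] {v : ι → E}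
    (hv : Summable fun i => ‖v i‖ ^ 2) {r : ℝ} (hr : 2 ≤ r) :
    ∑' i, ‖v i‖ ^ r ≤ (∑' i, ‖v i‖ ^ 2) ^ (r / 2) := by
  set S := ∑' i, ‖v i‖ ^ 2
  have hsplit : ∀ x : ℝ, 0 ≤ x → x ^ (r / 2) = x * x ^ (r / 2 - 1) := fun x hx => by
    rw [← Real.rpow_one_add' hx (by linarith)]
    ring_nf
  have hpt : ∀ i, ‖v i‖ ^ r ≤ ‖v i‖ ^ 2 * S ^ (r / 2 - 1) := fun i => by
    have hsq : ‖v i‖ ^ 2 ≤ S := hv.le_tsum i fun j _ => by positivity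
    calc ‖v i‖ ^ r = (‖v i‖ ^ 2) ^ (r / 2) := by
          rw [← Real.rpow_natCast, ← Real.rpow_mul (norm_nonneg _)]
          ring_nf
      _ ≤ ‖v i‖ ^ 2 * S ^ (r / 2 - 1) := by
          rw [hsplit _ (by positivity)]
          gcongr
          linarith
  have hS : Summable fun i => ‖v i‖ ^ 2 * S ^ (r / 2 - 1) := hv.mul_right _
  calc ∑' i, ‖v i‖ ^ r ≤ ∑' i, ‖v i‖ ^ 2 * S ^ (r / 2 - 1) :=
        (hS.of_nonneg_of_le (fun i => by positivity) hpt).tsum_le_tsum hpt hS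
    _ = S ^ (r / 2) := by rw [tsum_mul_right, hsplit _ (tsum_nonneg fun i => by positivity)]

lemma exists_nat_pos_mul_mem_Icc {h L : ℝ} (hh : 0 < h) (hL : 0 < L) :
    ∃ N : ℕ, 0 < N ∧ L ≤ h * N ∧ h * N ≤ L + h := by
  refine ⟨⌈L / h⌉₊, Nat.ceil_pos.mpr (by positivity), ?_, ?_⟩
  · rw [mul_comm, ← div_le_iff₀ hh]
    exact Nat.le_ceil _
  · have := Nat.ceil_lt_add_one (div_pos hL hh).le
    rw [← le_div_iff₀' hh, add_div, div_self hh.ne']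
    exact this.le

lemma exists_forall_mem_Icc_div_sq_sub_rpow_le_neg {C₁ C₂ α : ℝ} (hC₁ : 0 ≤ C₁)
    (hC₂ : 0 < C₂) (hα₀ : 0 ≤ α) (hα : α < 2) (A : ℝ) :
    ∃ L, A ≤ L ∧ 0 < L ∧
      ∃ c > 0, ∀ ℓ ∈ Set.Icc L (2 * L), C₁ / ℓ ^ 2 - C₂ * ℓ ^ (-α) ≤ -c := by
  set K := C₂ * 2 ^ (-α) / 2
  have hK : 0 < K := by positivity
  obtain ⟨L, hLC, hLA⟩ := (((tendsto_rpow_atTop (by linarith : 0 < 2 - α)).const_mul_atTop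
    hK).eventually_ge_atTop C₁ |>.and (eventually_ge_atTop (max A 1))).exists
  have hL : 0 < L := by linarith [le_max_right A 1]
  refine ⟨L, (le_max_left A 1).trans hLA, hL, K * L ^ (-α), by positivity,
    fun ℓ ⟨hLℓ, hℓL⟩ => ?_⟩
  have hgrad : C₁ / ℓ ^ 2 ≤ K * L ^ (-α) :=
    calc C₁ / ℓ ^ 2 ≤ C₁ / L ^ 2 := by gcongr
      _ ≤ K * L ^ (2 - α) / L ^ 2 := by gcongr
      _ = K * L ^ (-α) := by
          rw [Real.rpow_sub hL, Real.rpow_neg hL.le, Real.rpow_two]; field_simp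
  have hnonlin : 2 * (K * L ^ (-α)) ≤ C₂ * ℓ ^ (-α) :=
    calc 2 * (K * L ^ (-α)) = C₂ * (2 * L) ^ (-α) := by
          rw [Real.mul_rpow zero_le_two hL.le]; ring
      _ ≤ C₂ * ℓ ^ (-α) := mul_le_mul_of_nonneg_left
          (Real.rpow_le_rpow_of_nonpos (hL.trans_le hLℓ) hℓL (by linarith)) hC₂.le
  linarith

section scaling

variable {d : ℕ} {p h : ℝ} (c : ℂ) (v : ZLat d → ℂ)

lemma smul_mem_ell2 {v : ZLat d → ℂ} (hv : v ∈ ell2 d) : c • v ∈ ell2 d := by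
  simpa [ell2, norm_smul, mul_pow] using (show Summable _ from hv).mul_left (‖c‖ ^ 2)

lemma massZ_smul : massZ d h (c • v) = ‖c‖ ^ 2 * massZ d h v := by
  simp only [massZ, Pi.smul_apply, smul_eq_mul, norm_mul, mul_pow, tsum_mul_left]
  ring

lemma gradZ_smul : gradZ d h (c • v) = ‖c‖ ^ 2 * gradZ d h v := by
  simp only [gradZ, Pi.smul_apply, smul_eq_mul, ← mul_sub, norm_mul, mul_pow, ← mul_add,
    ← mul_sum, tsum_mul_left]
  ring

lemma nonlinZ_smul : nonlinZ d p h (c • v) = ‖c‖ ^ (p + 1) * nonlinZ d p h v := by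
  simp only [nonlinZ, Pi.smul_apply, smul_eq_mul, norm_mul,
    Real.mul_rpow (norm_nonneg _) (norm_nonneg _), tsum_mul_left]
  ring

lemma gradZ_nonneg (hh : 0 ≤ h) : 0 ≤ gradZ d h v :=
  mul_nonneg (by positivity) (tsum_nonneg fun _ => sum_nonneg fun _ _ => by positivity)

end scaling

lemma bddBelow_energyZ_image {d : ℕ} {p h m : ℝ} (hp : 1 ≤ p) (hh : 0 < h) :
    BddBelow (energyZ d p h '' {v ∈ ell2 d | massZ d h v = m}) := by
  refine ⟨-(h ^ d / (p + 1) * (m / h ^ d) ^ ((p + 1) / 2)), ?_⟩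
  rintro _ ⟨v, ⟨hv, hvm⟩, rfl⟩
  have hsum : ∑' x, ‖v x‖ ^ 2 = m / h ^ d := by
    rw [← hvm, massZ, mul_div_cancel_left₀ _ (by positivity)]
  have hnonlin : nonlinZ d p h v ≤ h ^ d / (p + 1) * (m / h ^ d) ^ ((p + 1) / 2) := by
    rw [nonlinZ, ← hsum]
    gcongr
    exact tsum_norm_rpow_le hv (by linarith)
  rw [energyZ]
  linarith [gradZ_nonneg v hh.le]

-- Test with `√(m / M) • v`, which has mass `m`.
lemma Emin_le_of_massZ_pos {d : ℕ} {p h m : ℝ} (hp : 1 ≤ p) (hh : 0 < h) (hm : 0 ≤ m)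
    {v : ZLat d → ℂ} (hv : v ∈ ell2 d) (hM : 0 < massZ d h v) :
    Emin d p h m ≤ m * (gradZ d h v / massZ d h v)
      - m ^ ((p + 1) / 2) * (nonlinZ d p h v / massZ d h v ^ ((p + 1) / 2)) := by
  set M := massZ d h v
  set a := √(m / M)
  have ha : ‖(a : ℂ)‖ = a := by simp [a]
  have ha2 : a ^ 2 = m / M := Real.sq_sqrt (by positivity)
  have hap : a ^ (p + 1) = (m / M) ^ ((p + 1) / 2) := by
    rw [show a = (m / M) ^ (1 / 2 : ℝ) from Real.sqrt_eq_rpow _,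
      ← Real.rpow_mul (by positivity)]
    ring_nf
  have hmass : massZ d h ((a : ℂ) • v) = m := by
    rw [massZ_smul, ha, ha2, div_mul_cancel₀ _ hM.ne']
  calc Emin d p h m ≤ energyZ d p h ((a : ℂ) • v) :=
        csInf_le (bddBelow_energyZ_image hp hh) ⟨_, ⟨smul_mem_ell2 _ hv, hmass⟩, rfl⟩
    _ = _ := by
        rw [energyZ, gradZ_smul, nonlinZ_smul, ha, ha2, hap, Real.div_rpow hm hM.le]
        ring

def gradDensity (f : ℤ → ℝ) (k : ℤ) : ℝ := (f (k + 1) - f k) ^ 2 + (f (k - 1) - f k) ^ 2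

def tensorPow (d : ℕ) (f : ℤ → ℝ) : ZLat d → ℂ :=
  fun x => ((∏ i, f (x i) : ℝ) : ℂ)

section tensorPow

variable {d : ℕ} {f : ℤ → ℝ}

lemma norm_tensorPow (x : ZLat d) : ‖tensorPow d f x‖ = ∏ i, |f (x i)| := by
  rw [tensorPow, Complex.norm_real, Real.norm_eq_abs, abs_prod]

lemma norm_tensorPow_update_sub_sq (x : ZLat d) (i : Fin d) (y : ℤ) :
    ‖tensorPow d f (update x i y) - tensorPow d f x‖ ^ 2
      = (f y - f (x i)) ^ 2 * ∏ j ∈ univ \ {i}, f (x j) ^ 2 := by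
  rw [tensorPow, tensorPow, ← Complex.ofReal_sub, Complex.norm_real, Real.norm_eq_abs, sq_abs,
    prod_apply_update, prod_eq_mul_prod_sdiff_singleton_of_mem (mem_univ i), ← sub_mul, mul_pow,
    prod_pow]

variable (s : Finset ℤ) (hf : ∀ k ∉ s, f k = 0)
include hf

lemma hasSum_norm_tensorPow_sq :
    HasSum (fun x => ‖tensorPow d f x‖ ^ 2) ((∑ k ∈ s, f k ^ 2) ^ d) := by
  simp_rw [norm_tensorPow, ← prod_pow, sq_abs]
  have := hasSum_prod_apply s (fun (_ : Fin d) k => f k ^ 2) fun _ k hk => by simp [hf k hk]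
  rwa [prod_const, card_univ, Fintype.card_fin] at this

lemma hasSum_norm_tensorPow_rpow {r : ℝ} (hr : r ≠ 0) :
    HasSum (fun x => ‖tensorPow d f x‖ ^ r) ((∑ k ∈ s, |f k| ^ r) ^ d) := by
  simp_rw [norm_tensorPow, ← Real.finsetProd_rpow _ _ fun i _ => abs_nonneg (f _)]
  have := hasSum_prod_apply s (fun (_ : Fin d) k => |f k| ^ r) fun _ k hk => by
    simp [hf k hk, Real.zero_rpow hr]
  rwa [prod_const, card_univ, Fintype.card_fin] at this

lemma tensorPow_mem_ell2 : tensorPow d f ∈ ell2 d :=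
  (hasSum_norm_tensorPow_sq s hf).summable

lemma massZ_tensorPow (h : ℝ) :
    massZ d h (tensorPow d f) = h ^ d * (∑ k ∈ s, f k ^ 2) ^ d := by
  rw [massZ, (hasSum_norm_tensorPow_sq s hf).tsum_eq]

lemma nonlinZ_tensorPow (p h : ℝ) (hp : p + 1 ≠ 0) :
    nonlinZ d p h (tensorPow d f) = h ^ d / (p + 1) * (∑ k ∈ s, |f k| ^ (p + 1)) ^ d := by
  rw [nonlinZ, (hasSum_norm_tensorPow_rpow s hf hp).tsum_eq]

lemma hasSum_gradDensity_mul_prod_sq (hg : ∀ k ∉ s, gradDensity f k = 0) (i : Fin d) :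
    HasSum (fun x : ZLat d => gradDensity f (x i) * ∏ j ∈ univ \ {i}, f (x j) ^ 2)
      ((∑ k ∈ s, gradDensity f k) * (∑ k ∈ s, f k ^ 2) ^ (d - 1)) := by
  set F : Fin d → ℤ → ℝ := update (fun _ k => f k ^ 2) i (gradDensity f)
  have hF : ∀ j, ∀ k ∉ s, F j k = 0 := fun j k hk => by
    rcases eq_or_ne j i with rfl | hj <;> simp [F, *]
  have hterm (x : ZLat d) :
      ∏ j, F j (x j) = gradDensity f (x i) * ∏ j ∈ univ \ {i}, f (x j) ^ 2 := by
    simp_rw [F, apply_update (fun j (G : ℤ → ℝ) => G (x j))]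
    exact prod_update_of_mem (mem_univ i) _ _
  have hsums : (fun j => ∑ k ∈ s, F j k)
      = update (fun _ => ∑ k ∈ s, f k ^ 2) i (∑ k ∈ s, gradDensity f k) := by
    ext j
    rcases eq_or_ne j i with rfl | hj <;> simp [F, *]
  have := hasSum_prod_apply s F hF
  rwa [funext hterm, hsums, prod_update_of_mem (mem_univ i), prod_const, card_univ_sdiff,
    card_singleton, Fintype.card_fin] at this

lemma gradZ_tensorPow (hg : ∀ k ∉ s, gradDensity f k = 0) (h : ℝ) :
    gradZ d h (tensorPow d f)
      = h ^ d / h ^ 2 / 2 *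
          (d * (∑ k ∈ s, gradDensity f k) * (∑ k ∈ s, f k ^ 2) ^ (d - 1)) := by
  have hsum := hasSum_sum fun i (_ : i ∈ (univ : Finset (Fin d))) =>
    hasSum_gradDensity_mul_prod_sq s hf hg i
  rw [sum_const, card_univ, Fintype.card_fin, nsmul_eq_mul] at hsum
  rw [gradZ, mul_assoc (d : ℝ), ← hsum.tsum_eq]
  congr 1
  refine tsum_congr fun x => sum_congr rfl fun i _ => ?_
  rw [add_single_eq_update, sub_single_eq_update, norm_tensorPow_update_sub_sq,
    norm_tensorPow_update_sub_sq, gradDensity, add_mul]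

end tensorPow

def tent (N : ℕ) (k : ℤ) : ℝ := max 0 (1 - |(k : ℝ) - N| / N)

section tent

variable {N : ℕ}

lemma tent_nonneg (k : ℤ) : 0 ≤ tent N k := le_max_left _ _

lemma tent_le_one (k : ℤ) : tent N k ≤ 1 :=
  max_le zero_le_one (sub_le_self 1 (by positivity : (0 : ℝ) ≤ |(k : ℝ) - N| / N))

lemma tent_eq_zero_of_notMem_Ioo (hN : 0 < N) {k : ℤ} (hk : k ∉ Ioo 0 (2 * (N : ℤ))) :
    tent N k = 0 := by
  have hN' : (0 : ℝ) < N := by exact_mod_cast hN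
  have hk' : (N : ℝ) ≤ |(k : ℝ) - N| := by
    rw [mem_Ioo, not_and_or, not_lt, not_lt] at hk
    rcases hk with hk | hk
    · rw [abs_of_nonpos] <;> linarith [(Int.cast_nonpos.mpr hk : (k : ℝ) ≤ 0)]
    · have : (2 * N : ℝ) ≤ k := by exact_mod_cast hk
      rw [abs_of_nonneg] <;> linarith
  exact max_eq_left (by rw [sub_nonpos, one_le_div hN']; exact hk')

lemma abs_tent_sub_tent_le (k l : ℤ) : |tent N k - tent N l| ≤ |k - l| / N := by
  simp only [tent, max_comm (0 : ℝ)]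
  refine (abs_max_sub_max_le_abs _ _ _).trans ?_
  rw [sub_sub_sub_cancel_left, ← sub_div, abs_div, Nat.abs_cast, Int.cast_abs, Int.cast_sub]
  gcongr ?_ / _
  simpa [abs_sub_comm (l : ℝ)] using abs_abs_sub_abs_le_abs_sub ((l : ℝ) - N) ((k : ℝ) - N)

lemma half_le_tent {k : ℤ} (hk : 2 * |k - N| ≤ N) : 1 / 2 ≤ tent N k := by
  have hk' : |(k : ℝ) - N| ≤ 1 / 2 * N := by
    have : (2 * |k - N| : ℝ) ≤ N := by exact_mod_cast hk
    push_cast at this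
    linarith
  have := div_le_of_le_mul₀ (Nat.cast_nonneg N) one_half_pos.le hk'
  exact le_max_of_le_right (by linarith)

end tent

/-- A window containing the supports of `tent N` and of its gradient density. -/
def tentWindow (N : ℕ) : Finset ℤ := Icc (-1) (2 * N + 1)

section tentWindow

variable {N : ℕ}

lemma le_sum_tent_rpow {r : ℝ} (hr : 0 ≤ r) :
    N * (1 / 2) ^ r ≤ ∑ k ∈ tentWindow N, tent N k ^ r := by
  set P : Finset ℤ := Icc ((N : ℤ) - N / 2) (N + N / 2)
  have hP : P ⊆ tentWindow N := fun k hk => by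
    simp only [P, tentWindow, mem_Icc] at hk ⊢; omega
  have hcard : (N : ℝ) ≤ #P := by
    have : #P = 2 * (N / 2) + 1 := by simp only [P, Int.card_Icc]; omega
    rw [this]
    exact_mod_cast (by omega : N ≤ 2 * (N / 2) + 1)
  calc (N : ℝ) * (1 / 2) ^ r ≤ #P • (1 / 2 : ℝ) ^ r := by
        rw [nsmul_eq_mul]; gcongr
    _ ≤ ∑ k ∈ P, tent N k ^ r := card_nsmul_le_sum _ _ _ fun k hk => by
        refine Real.rpow_le_rpow (by norm_num) (half_le_tent ?_) hr
        simp only [P, mem_Icc] at hk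
        have : |k - N| ≤ (N : ℤ) / 2 := abs_le.mpr ⟨by omega, by omega⟩
        omega
    _ ≤ ∑ k ∈ tentWindow N, tent N k ^ r :=
        sum_le_sum_of_subset_of_nonneg hP fun k _ _ => Real.rpow_nonneg (tent_nonneg k) r

lemma quarter_le_sum_tent_sq : (N : ℝ) / 4 ≤ ∑ k ∈ tentWindow N, tent N k ^ 2 := by
  convert le_sum_tent_rpow (N := N) zero_le_two using 1
  · norm_num [div_eq_mul_one_div]
  · simp

variable (hN : 0 < N)
include hN

lemma tent_eq_zero_of_notMem_tentWindow {k : ℤ} (hk : k ∉ tentWindow N) : tent N k = 0 :=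
  tent_eq_zero_of_notMem_Ioo hN fun h => hk (by
    simp only [tentWindow, mem_Icc]; simp only [mem_Ioo] at h; omega)

lemma gradDensity_tent_eq_zero_of_notMem_tentWindow {k : ℤ} (hk : k ∉ tentWindow N) :
    gradDensity (tent N) k = 0 := by
  simp only [tentWindow, mem_Icc, not_and_or, not_le] at hk
  have hk₀ := tent_eq_zero_of_notMem_Ioo hN (k := k) (by simp only [mem_Ioo]; omega)
  have hk₁ := tent_eq_zero_of_notMem_Ioo hN (k := k + 1) (by simp only [mem_Ioo]; omega)
  have hk₂ := tent_eq_zero_of_notMem_Ioo hN (k := k - 1) (by simp only [mem_Ioo]; omega)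
  simp [gradDensity, hk₀, hk₁, hk₂]

lemma card_tentWindow_le : (#(tentWindow N) : ℝ) ≤ 5 * N := by
  have : #(tentWindow N) = 2 * N + 3 := by simp only [tentWindow, Int.card_Icc]; omega
  rw [this]
  have : (1 : ℝ) ≤ N := by exact_mod_cast hN
  push_cast
  linarith

lemma sum_tent_sq_le : ∑ k ∈ tentWindow N, tent N k ^ 2 ≤ 5 * N := by
  refine le_trans ?_ (card_tentWindow_le hN)
  rw [← nsmul_one, ← sum_const]
  exact sum_le_sum fun k _ => pow_le_one₀ (tent_nonneg k) (tent_le_one k)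

lemma sum_gradDensity_tent_le : ∑ k ∈ tentWindow N, gradDensity (tent N) k ≤ 10 / N := by
  have hN' : (0 : ℝ) < N := by exact_mod_cast hN
  have hsq : ∀ k l : ℤ, |k - l| ≤ 1 → (tent N k - tent N l) ^ 2 ≤ 1 / N ^ 2 := by
    intro k l hkl
    rw [← sq_abs, one_div, ← inv_pow]
    refine pow_le_pow_left₀ (abs_nonneg _) ((abs_tent_sub_tent_le k l).trans ?_) 2
    rw [← one_div]
    gcongr
    exact_mod_cast hkl
  calc ∑ k ∈ tentWindow N, gradDensity (tent N) k
      ≤ #(tentWindow N) • (2 * (1 / (N : ℝ) ^ 2)) :=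
        sum_le_card_nsmul _ _ _ fun k _ => by
          linarith [hsq (k + 1) k (by simp), hsq (k - 1) k (by simp), show gradDensity (tent N) k
            = (tent N (k + 1) - tent N k) ^ 2 + (tent N (k - 1) - tent N k) ^ 2 from rfl]
    _ ≤ 5 * N * (2 * (1 / (N : ℝ) ^ 2)) := by
        rw [nsmul_eq_mul]; gcongr; exact card_tentWindow_le hN
    _ = 10 / N := by field_simp; ring

end tentWindow

section tentTest

variable {d N : ℕ} {h : ℝ} (hN : 0 < N) (hh : 0 < h)
include hN hh

lemma massZ_tensorPow_tent_pos : 0 < massZ d h (tensorPow d (tent N)) := by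
  have : (0 : ℝ) < N := by exact_mod_cast hN
  rw [massZ_tensorPow _ (fun k => tent_eq_zero_of_notMem_tentWindow hN)]
  have := (quarter_le_sum_tent_sq (N := N)).trans_lt' (by positivity)
  positivity

lemma gradZ_div_massZ_tensorPow_tent_le :
    gradZ d h (tensorPow d (tent N)) / massZ d h (tensorPow d (tent N))
      ≤ 20 * d / (h * N) ^ 2 := by
  have hN' : (0 : ℝ) < N := by exact_mod_cast hN
  rw [gradZ_tensorPow _ (fun k => tent_eq_zero_of_notMem_tentWindow hN)
      (fun k => gradDensity_tent_eq_zero_of_notMem_tentWindow hN),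
    massZ_tensorPow _ (fun k => tent_eq_zero_of_notMem_tentWindow hN)]
  set S := ∑ k ∈ tentWindow N, tent N k ^ 2
  set G := ∑ k ∈ tentWindow N, gradDensity (tent N) k
  have hS : (N : ℝ) / 4 ≤ S := quarter_le_sum_tent_sq
  have hS₀ : 0 < S := hS.trans_lt' (by positivity)
  have hpow : (d : ℝ) * S ^ (d - 1) = d / S * S ^ d := by
    rcases d with _ | n
    · simp
    · rw [pow_succ]; field_simp; simp
  calc h ^ d / h ^ 2 / 2 * (d * G * S ^ (d - 1)) / (h ^ d * S ^ d) = d * G / (2 * h ^ 2 * S) := by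
        rw [mul_right_comm (d : ℝ), hpow]; field_simp
    _ ≤ d * (10 / N) / (2 * h ^ 2 * (N / 4)) := by
        gcongr; exact sum_gradDensity_tent_le hN
    _ = 20 * d / (h * N) ^ 2 := by field_simp; ring

lemma le_nonlinZ_div_massZ_rpow_tensorPow_tent {p : ℝ} (hp : -1 < p) :
    ((1 / 2) ^ (p + 1) / 5 ^ ((p + 1) / 2)) ^ d / (p + 1) * (h * N) ^ (-((p - 1) / 2 * d))
      ≤ nonlinZ d p h (tensorPow d (tent N))
          / massZ d h (tensorPow d (tent N)) ^ ((p + 1) / 2) := by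
  have hN' : (0 : ℝ) < N := by exact_mod_cast hN
  have hf := fun k => tent_eq_zero_of_notMem_tentWindow (k := k) hN
  rw [nonlinZ_tensorPow _ hf p h (by linarith), massZ_tensorPow _ hf]
  set S := ∑ k ∈ tentWindow N, tent N k ^ 2
  set R := ∑ k ∈ tentWindow N, |tent N k| ^ (p + 1)
  set s := (p + 1) / 2 with hs_def
  have hs : 0 ≤ s := by rw [hs_def]; linarith
  have hhN : 0 < h * N := mul_pos hh hN'
  have hS₀ : 0 < S := quarter_le_sum_tent_sq.trans_lt' (by positivity)
  have hR : N * (1 / 2) ^ (p + 1) ≤ R := by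
    simpa only [R, abs_of_nonneg (tent_nonneg _)] using le_sum_tent_rpow (N := N) (by linarith)
  have hfactor : (1 / 2) ^ (p + 1) / 5 ^ s * (h * N) ^ (-((p - 1) / 2)) ≤ h * R / (h * S) ^ s :=
    calc (1 / 2) ^ (p + 1) / 5 ^ s * (h * N) ^ (-((p - 1) / 2))
        = h * (N * (1 / 2) ^ (p + 1)) / (5 * (h * N)) ^ s := by
          rw [show -((p - 1) / 2) = 1 - s by ring, Real.rpow_sub hhN, Real.rpow_one,
            Real.mul_rpow (by norm_num) hhN.le]
          ring
      _ ≤ h * R / (h * S) ^ s := by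
          have hS : h * S ≤ 5 * (h * N) := by nlinarith [sum_tent_sq_le hN]
          exact div_le_div₀ (by positivity) (mul_le_mul_of_nonneg_left hR hh.le) (by positivity)
            (Real.rpow_le_rpow (by positivity) hS hs)
  calc ((1 / 2) ^ (p + 1) / 5 ^ s) ^ d / (p + 1) * (h * N) ^ (-((p - 1) / 2 * d))
      = ((1 / 2) ^ (p + 1) / 5 ^ s * (h * N) ^ (-((p - 1) / 2))) ^ d / (p + 1) := by
        rw [← neg_mul, Real.rpow_mul_natCast hhN.le, mul_pow]; ring
    _ ≤ (h * R / (h * S) ^ s) ^ d / (p + 1) := by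
        gcongr
        linarith
    _ = h ^ d / (p + 1) * R ^ d / (h ^ d * S ^ d) ^ s := by
        rw [← mul_pow h S, ← Real.rpow_pow_comm (by positivity), div_pow, mul_pow]; ring

lemma Emin_le_tensorPow_tent {p m : ℝ} (hp : 1 ≤ p) (hm : 0 ≤ m) :
    Emin d p h m ≤ m * (20 * d) / (h * N) ^ 2 - m ^ ((p + 1) / 2)
      * (((1 / 2) ^ (p + 1) / 5 ^ ((p + 1) / 2)) ^ d / (p + 1)) * (h * N) ^ (-((p - 1) / 2 * d)) :=
  calc Emin d p h m
      ≤ m * (gradZ d h (tensorPow d (tent N)) / massZ d h (tensorPow d (tent N)))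
        - m ^ ((p + 1) / 2) * (nonlinZ d p h (tensorPow d (tent N))
          / massZ d h (tensorPow d (tent N)) ^ ((p + 1) / 2)) :=
        Emin_le_of_massZ_pos hp hh hm
          (tensorPow_mem_ell2 _ fun k => tent_eq_zero_of_notMem_tentWindow hN)
          (massZ_tensorPow_tent_pos hN hh)
    _ ≤ _ := by
        rw [mul_div_assoc, mul_assoc]
        exact sub_le_sub (mul_le_mul_of_nonneg_left (gradZ_div_massZ_tensorPow_tent_le hN hh) hm)
          (mul_le_mul_of_nonneg_left (le_nonlinZ_div_massZ_rpow_tensorPow_tent hN hh (by linarith))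
            (by positivity))

end tentTest

theorem Emin_neg_uniform_general (d : ℕ) (p : ℝ) (hp : 1 < p)
    (hp' : p < 1 + 4 / (d : ℝ)) (m A : ℝ) (hm : 0 < m) :
    ∃ c > (0 : ℝ), ∀ h : ℝ, 0 < h → h ≤ A → Emin d p h m ≤ -c := by
  have hα : (p - 1) / 2 * d < 2 := by
    rcases Nat.eq_zero_or_pos d with rfl | hd
    · simp
    · have := (lt_div_iff₀ (by positivity : (0 : ℝ) < d)).1 (by linarith : p - 1 < 4 / d)
      linarith
  obtain ⟨L, hAL, hL, c, hc, hneg⟩ := exists_forall_mem_Icc_div_sq_sub_rpow_le_neg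
    (C₁ := m * (20 * d)) (C₂ := m ^ ((p + 1) / 2) *
      (((1 / 2) ^ (p + 1) / 5 ^ ((p + 1) / 2)) ^ d / (p + 1))) (by positivity)
    (mul_pos (by positivity) (div_pos (by positivity) (by linarith)))
    (mul_nonneg (by linarith) d.cast_nonneg) hα A
  refine ⟨c, hc, fun h hh hhA => ?_⟩
  obtain ⟨N, hN, hLN, hNL⟩ := exists_nat_pos_mul_mem_Icc hh hL
  exact (Emin_le_tensorPow_tent hN hh hp.le hm.le).trans (hneg _ ⟨hLN, by linarith⟩)

/-- in the mass-subcritical regime the minimal energy is bounded away from `0`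
from below, uniformly in the grid size `h ∈ (0, A]`. -/
theorem Emin_neg_uniform (d : ℕ) (hd : 1 ≤ d) (p : ℝ) (hp : 1 < p)
    (hp' : p < 1 + 4 / (d : ℝ)) (m A : ℝ) (hm : 0 < m) (hA : 0 < A) :
    ∃ c > (0 : ℝ), ∀ h : ℝ, 0 < h → h ≤ A → Emin d p h m ≤ -c :=
  Emin_neg_uniform_general d p hp hp' m A hm
end
end
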